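/- (Ge–Wu–Xue Yang-Baxterization, two-eigenvalue case.) Let Ř be an invertible N² × N² complex matrix satisfying the braid relation (Ř ⊗ I_N)(I_N ⊗ Ř)(Ř ⊗ I_N) = (I_N ⊗ Ř)(Ř ⊗ I_N)(I_N ⊗ Ř), and suppose (Ř − λ₁ I)(Ř − λ₂ I) = 0 for nonzero complex numbers λ₁, λ₂. Define Ř(z) = λ₂⁻¹ Ř + z λ₁ Ř⁻¹ for z ∈ ℂ. Then for all z, w ∈ ℂ, writing Ř₁(z) = Ř(z) ⊗ I_N and Ř₂(z) = I_N ⊗ Ř(z), one has Ř₁(z) Ř₂(zw) Ř₁(w) = Ř₂(w) Ř₁(zw) Ř₂(z). -/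
import Mathlib

open Matrix Kronecker BigOperators

/-- `I_n ⊗ M` reindexed so that it acts on `(V ⊗ V) ⊗ V`. -/
noncomputable def R2of (N : ℕ) (M : Matrix (Fin N × Fin N) (Fin N × Fin N) ℂ) :
    Matrix ((Fin N × Fin N) × Fin N) ((Fin N × Fin N) × Fin N) ℂ :=
  Matrix.reindex (Equiv.prodAssoc (Fin N) (Fin N) (Fin N)).symm
    (Equiv.prodAssoc (Fin N) (Fin N) (Fin N)).symm ((1 : Matrix (Fin N) (Fin N) ℂ) ⊗ₖ M)

lemma keylem {A : Type*} [Ring A] [Algebra ℂ A] (a b : A) (s p z w : ℂ)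
    (hbr : a*b*a = b*a*b) (ha : a*a = s•a - p•(1:A)) (hb : b*b = s•b - p•(1:A)) :
    ((1-z)•a + (z*s)•(1:A)) * ((1-(z*w))•b + ((z*w)*s)•(1:A)) * ((1-w)•a + (w*s)•(1:A))
    = ((1-w)•b + (w*s)•(1:A)) * ((1-(z*w))•a + ((z*w)*s)•(1:A)) * ((1-z)•b + (z*s)•(1:A)) := by
  simp only [add_mul, mul_add, smul_mul_assoc, mul_smul_comm, smul_smul, mul_one, one_mul,
    ha, hb, hbr, smul_sub]
  module

lemma R2of_mul (N : ℕ) (M M' : Matrix (Fin N × Fin N) (Fin N × Fin N) ℂ) :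
    R2of N (M * M') = R2of N M * R2of N M' := by
  unfold R2of
  rw [← Matrix.reindexAlgEquiv_apply ℂ ℂ, ← Matrix.reindexAlgEquiv_apply ℂ ℂ,
    ← Matrix.reindexAlgEquiv_apply ℂ ℂ, ← _root_.map_mul, ← Matrix.mul_kronecker_mul, one_mul]

lemma R2of_smul (N : ℕ) (c : ℂ) (M : Matrix (Fin N × Fin N) (Fin N × Fin N) ℂ) :
    R2of N (c • M) = c • R2of N M := by
  unfold R2of
  ext i j
  simp [Matrix.kronecker_smul, Matrix.reindex_apply, Matrix.submatrix_apply]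

lemma R2of_add (N : ℕ) (M M' : Matrix (Fin N × Fin N) (Fin N × Fin N) ℂ) :
    R2of N (M + M') = R2of N M + R2of N M' := by
  unfold R2of
  ext i j
  simp [Matrix.kronecker_add, Matrix.reindex_apply, Matrix.submatrix_apply]

lemma R2of_one (N : ℕ) : R2of N (1 : Matrix (Fin N × Fin N) (Fin N × Fin N) ℂ) = 1 := by
  unfold R2of
  rw [Matrix.one_kronecker_one, ← Matrix.reindexAlgEquiv_apply ℂ ℂ, _root_.map_one]

/-- Ge–Wu–Xue Yang-Baxterization, two-eigenvalue case: if an invertible `Ř`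
satisfies the braid relation and `(Ř − λ₁ I)(Ř − λ₂ I) = 0` with `λ₁ λ₂ ≠ 0`, then
`Ř(z) = λ₂⁻¹ Ř + z λ₁ Ř⁻¹` satisfies the Yang–Baxter equation with multiplicative
spectral parameter. -/
theorem stmt12 (N : ℕ) (hN : 0 < N)
    (R : Matrix (Fin N × Fin N) (Fin N × Fin N) ℂ) (hinv : IsUnit R)
    (hbraid : (R ⊗ₖ (1 : Matrix (Fin N) (Fin N) ℂ)) * R2of N R *
        (R ⊗ₖ (1 : Matrix (Fin N) (Fin N) ℂ))
      = R2of N R * (R ⊗ₖ (1 : Matrix (Fin N) (Fin N) ℂ)) * R2of N R)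
    (l₁ l₂ : ℂ) (h1 : l₁ ≠ 0) (h2 : l₂ ≠ 0)
    (hquad : (R - l₁ • (1 : Matrix (Fin N × Fin N) (Fin N × Fin N) ℂ)) *
      (R - l₂ • (1 : Matrix (Fin N × Fin N) (Fin N × Fin N) ℂ)) = 0) :
    ∀ z w : ℂ,
      ((l₂⁻¹ • R + (z * l₁) • R⁻¹) ⊗ₖ (1 : Matrix (Fin N) (Fin N) ℂ)) *
        R2of N (l₂⁻¹ • R + ((z * w) * l₁) • R⁻¹) *
        ((l₂⁻¹ • R + (w * l₁) • R⁻¹) ⊗ₖ (1 : Matrix (Fin N) (Fin N) ℂ))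
      = R2of N (l₂⁻¹ • R + (w * l₁) • R⁻¹) *
        ((l₂⁻¹ • R + ((z * w) * l₁) • R⁻¹) ⊗ₖ (1 : Matrix (Fin N) (Fin N) ℂ)) *
        R2of N (l₂⁻¹ • R + (z * l₁) • R⁻¹) := by
  intro z w
  set s : ℂ := l₁ + l₂ with hs
  set p : ℂ := l₁ * l₂ with hpdef
  have hp : p ≠ 0 := mul_ne_zero h1 h2
  -- quadratic relation
  have hR2 : R * R = s • R - p • (1 : Matrix (Fin N × Fin N) (Fin N × Fin N) ℂ) := by
    rw [← sub_eq_zero, ← hquad]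
    simp only [sub_mul, mul_sub, smul_mul_assoc, mul_smul_comm, mul_one, one_mul, smul_smul]
    module
  -- inverse formula
  have hRinv : R⁻¹ = p⁻¹ • (s • (1 : Matrix (Fin N × Fin N) (Fin N × Fin N) ℂ) - R) := by
    apply Matrix.inv_eq_right_inv
    have hstep : R * (s • (1 : Matrix (Fin N × Fin N) (Fin N × Fin N) ℂ) - R)
        = p • (1 : Matrix (Fin N × Fin N) (Fin N × Fin N) ℂ) := by
      rw [mul_sub, mul_smul_comm, mul_one, hR2]; module
    rw [Matrix.mul_smul, hstep, smul_smul, inv_mul_cancel₀ hp, one_smul]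
  -- rewrite R(z)
  have hRz : ∀ u : ℂ, l₂⁻¹ • R + (u * l₁) • R⁻¹
      = l₂⁻¹ • ((1-u) • R + (u*s) • (1 : Matrix (Fin N × Fin N) (Fin N × Fin N) ℂ)) := by
    intro u
    rw [hRinv]
    simp only [smul_sub, smul_add, smul_smul]
    match_scalars <;> field_simp <;> ring
  set a : Matrix ((Fin N × Fin N) × Fin N) ((Fin N × Fin N) × Fin N) ℂ :=
    R ⊗ₖ (1 : Matrix (Fin N) (Fin N) ℂ) with ha
  have hKmul : ∀ M M' : Matrix (Fin N × Fin N) (Fin N × Fin N) ℂ,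
      (M * M') ⊗ₖ (1 : Matrix (Fin N) (Fin N) ℂ)
      = (M ⊗ₖ (1 : Matrix (Fin N) (Fin N) ℂ)) * (M' ⊗ₖ (1 : Matrix (Fin N) (Fin N) ℂ)) := by
    intro M M'
    rw [← Matrix.mul_kronecker_mul, one_mul]
  have hA2 : a * a = s • a - p • (1 : Matrix ((Fin N × Fin N) × Fin N)
      ((Fin N × Fin N) × Fin N) ℂ) := by
    rw [ha, ← hKmul, hR2, sub_eq_add_neg, Matrix.add_kronecker, ← neg_smul,
      Matrix.smul_kronecker, Matrix.smul_kronecker, Matrix.one_kronecker_one, neg_smul,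
      ← sub_eq_add_neg]
  set b : Matrix ((Fin N × Fin N) × Fin N) ((Fin N × Fin N) × Fin N) ℂ := R2of N R with hbdef
  have hB2 : b * b = s • b - p • (1 : Matrix ((Fin N × Fin N) × Fin N)
      ((Fin N × Fin N) × Fin N) ℂ) := by
    rw [hbdef, ← R2of_mul, hR2, sub_eq_add_neg, R2of_add, ← neg_smul, R2of_smul, R2of_smul,
      R2of_one, neg_smul, ← sub_eq_add_neg]
  rw [hRz z, hRz w, hRz (z*w)]
  simp only [R2of_smul, R2of_add, R2of_one, Matrix.smul_kronecker, Matrix.add_kronecker,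
    Matrix.one_kronecker_one, smul_mul_assoc, mul_smul_comm, smul_smul]
  rw [keylem a b s p z w hbraid hA2 hB2]
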